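/- Let X = {X_{k,n} : 1 ≤ k ≤ k(n), n ≥ 1} be an array of random variables on a common probability space with k(n) → ∞, such that for each n the variables X_{1,n}, …, X_{k(n),n} are independent and X_{k,n} follows the corrected geometric law G*(p_{k,n}) with 0 < p_{k,n} = 1 − q_{k,n} < 1. Assume: (GN2) sup_{1≤k≤k(n)} q_{k,n}/p_{k,n}² → 0; (GN3) for h ∈ {1,2}, Σ_{k=1}^{k(n)} q_{k,n}/p_{k,n}^h → λ for some λ ∈ (0,∞); (GN4) for every 0 < ε < 1, B(ε,n) = Σ_{k=1}^{k(n)} Σ_{j=0}^{∞} 1{|j − q_{k,n}/p_{k,n} − 1| ≥ ε} (j − q_{k,n}/p_{k,n})² p_{k,n} q_{k,n}^j → 0. Then S_n[X] = Σ_{k=1}^{k(n)} X_{k,n} converges in distribution to the Poisson law P(λ); equivalently, for every j ∈ ℕ, P(S_n[X] = j) → e^{−λ} λ^j / j!. -/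

import Mathlib

/-!
By independence, `P(S_n = j) = (∏_k p_{k,n}) · h_j(q_{·,n})`, where `h_j` is the complete
homogeneous symmetric polynomial of degree `j`. The product is squeezed between
`exp (-∑ q/p)` and `exp (-∑ q)`; both exponents tend to `-λ`, because
`∑ q/p - ∑ q = ∑ (q/p) q ≤ (max q) ∑ q/p` and `max q ≤ max q/p² → 0`. For the same reason
`∑ q² → 0`. Finally `(∑ q)^j / j! ≤ h_j`, and the excess comes only from monomials with a
repeated index, which contribute at most `(∑ q²) (∑ q)^(j-2)`; hence `h_j → λ^j / j!`.
-/

open Finset Filter Topology MeasureTheory ProbabilityTheory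

section CompleteHomogeneous

variable {ι R : Type*} [CommSemiring R]

open Nat in
lemma multinomial_eq_factorial_sum {s : Finset ι} {c : ι → ℕ} (hc : ∀ i, c i ≤ 1) :
    Nat.multinomial s c = (∑ i ∈ s, c i)! := by
  rw [Nat.multinomial, prod_eq_one fun i _ => Nat.factorial_eq_one.2 (hc i), Nat.div_one]

lemma prod_pow_nonneg [PartialOrder R] [IsOrderedRing R] {s : Finset ι} {q : ι → R}
    (hq : ∀ k ∈ s, 0 ≤ q k) (c : ι → ℕ) : 0 ≤ ∏ k ∈ s, q k ^ c k :=
  prod_nonneg fun k hk => pow_nonneg (hq k hk) _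

variable [DecidableEq ι]

def completeHomogeneous (s : Finset ι) (q : ι → R) (j : ℕ) : R :=
  ∑ c ∈ s.piAntidiag j, ∏ k ∈ s, q k ^ c k

variable {s : Finset ι} {q : ι → R} {j : ℕ}

lemma le_of_mem_piAntidiag {c : ι → ℕ} (hc : c ∈ s.piAntidiag j) (k : ι) : c k ≤ j := by
  rw [mem_piAntidiag] at hc
  by_cases hk : k ∈ s
  · exact hc.1 ▸ single_le_sum (fun i _ => Nat.zero_le (c i)) hk
  · simp [not_imp_comm.1 (hc.2 k) hk]

lemma add_single_mem_piAntidiag_iff {k : ι} (hk : k ∈ s) {c : ι → ℕ} :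
    c + Pi.single k 2 ∈ s.piAntidiag (j + 2) ↔ c ∈ s.piAntidiag j := by
  simp only [mem_piAntidiag, sum_add_distrib, sum_pi_single', if_pos hk, add_left_inj,
    Pi.add_apply]
  refine and_congr_right fun _ => forall_congr' fun i => ?_
  by_cases hi : i = k
  · simp [hi, hk]
  · simp [hi]

lemma prod_pow_add_single {k : ι} (hk : k ∈ s) (c : ι → ℕ) :
    ∏ i ∈ s, q i ^ (c + Pi.single k 2 : ι → ℕ) i = q k ^ 2 * ∏ i ∈ s, q i ^ c i := by
  simp only [Pi.add_apply, pow_add, prod_mul_distrib, mul_comm (q k ^ 2)]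
  congr 1
  refine (prod_eq_single_of_mem k hk fun i _ hi => ?_).trans (by simp)
  simp [hi]

lemma sum_filter_two_le_prod_pow_eq {k : ι} (hk : k ∈ s) :
    ∑ c ∈ (s.piAntidiag (j + 2)).filter (fun c => 2 ≤ c k), ∏ i ∈ s, q i ^ c i
      = q k ^ 2 * completeHomogeneous s q j := by
  have hcancel : ∀ c : ι → ℕ, 2 ≤ c k → c - Pi.single k 2 + Pi.single k 2 = c := by
    intro c hc
    funext i
    by_cases hi : i = k
    · subst hi; simp; omega
    · simp [hi]
  rw [completeHomogeneous, mul_sum]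
  refine sum_nbij' (fun c => c - Pi.single k 2) (fun c => c + Pi.single k 2) ?_ ?_ ?_ ?_ ?_
  · intro c hc
    rw [mem_filter] at hc
    rw [← add_single_mem_piAntidiag_iff hk, hcancel c hc.2]
    exact hc.1
  · intro c hc
    rw [mem_filter, add_single_mem_piAntidiag_iff hk]
    exact ⟨hc, by simp⟩
  · intro c hc
    exact hcancel c (mem_filter.1 hc).2
  · intro c _
    simp
  · intro c hc
    rw [← prod_pow_add_single hk, hcancel c (mem_filter.1 hc).2]

variable [PartialOrder R] [IsOrderedRing R]

lemma completeHomogeneous_nonneg (hq : ∀ k ∈ s, 0 ≤ q k) : 0 ≤ completeHomogeneous s q j :=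
  sum_nonneg fun c _ => prod_pow_nonneg hq c

lemma completeHomogeneous_le_sum_pow (hq : ∀ k ∈ s, 0 ≤ q k) :
    completeHomogeneous s q j ≤ (∑ k ∈ s, q k) ^ j := by
  rw [sum_pow_eq_sum_piAntidiag]
  refine sum_le_sum fun c _ => le_mul_of_one_le_left (prod_pow_nonneg hq c) ?_
  simpa using Nat.mono_cast (α := R) (Nat.multinomial_pos s c)

open Nat in
lemma sum_pow_le_factorial_mul_completeHomogeneous (hq : ∀ k ∈ s, 0 ≤ q k) :
    (∑ k ∈ s, q k) ^ j ≤ j ! * completeHomogeneous s q j := by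
  rw [sum_pow_eq_sum_piAntidiag, completeHomogeneous, mul_sum]
  refine sum_le_sum fun c hc => mul_le_mul_of_nonneg_right ?_ (prod_pow_nonneg hq c)
  rw [← (mem_piAntidiag.1 hc).1]
  exact Nat.mono_cast (Nat.div_le_self _ _)

lemma sum_filter_exists_two_le_prod_pow_le (hq : ∀ k ∈ s, 0 ≤ q k) :
    ∑ c ∈ (s.piAntidiag j).filter (fun c => ∃ i ∈ s, 2 ≤ c i), ∏ i ∈ s, q i ^ c i
      ≤ (∑ k ∈ s, q k ^ 2) * completeHomogeneous s q (j - 2) := by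
  obtain ⟨j, rfl⟩ | hj : (∃ i, j = i + 2) ∨ j < 2 :=
    (lt_or_ge j 2).symm.imp_left fun h => ⟨j - 2, by omega⟩
  · calc _ ≤ ∑ k ∈ s, ∑ c ∈ (s.piAntidiag (j + 2)).filter (fun c => 2 ≤ c k),
            ∏ i ∈ s, q i ^ c i := by
          simp only [sum_filter]
          rw [sum_comm]
          refine sum_le_sum fun c _ => ?_
          have hterm : ∀ k, 0 ≤ if 2 ≤ c k then ∏ i ∈ s, q i ^ c i else 0 := fun k => by
            split_ifs
            exacts [prod_pow_nonneg hq c, le_rfl]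
          split_ifs with h
          · obtain ⟨k, hks, hk⟩ := h
            exact le_of_eq_of_le (if_pos hk).symm (single_le_sum (fun i _ => hterm i) hks)
          · exact sum_nonneg fun k _ => hterm k
      _ = _ := by
          rw [Nat.add_sub_cancel, sum_mul]
          exact sum_congr rfl fun k hk => sum_filter_two_le_prod_pow_eq hk
  · rw [filter_false_of_mem fun c hc ⟨i, _, hi⟩ => by have := le_of_mem_piAntidiag hc i; omega,
      sum_empty]
    exact mul_nonneg (sum_nonneg fun k hk => pow_nonneg (hq k hk) 2)
      (completeHomogeneous_nonneg hq)

open Nat in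
lemma factorial_mul_completeHomogeneous_le (hq : ∀ k ∈ s, 0 ≤ q k) :
    j ! * completeHomogeneous s q j
      ≤ (∑ k ∈ s, q k) ^ j + j ! * ((∑ k ∈ s, q k ^ 2) * completeHomogeneous s q (j - 2)) := by
  rw [completeHomogeneous, ← sum_filter_not_add_sum_filter _ (fun c => ∃ i ∈ s, 2 ≤ c i),
    mul_add]
  refine add_le_add ?_ (mul_le_mul_of_nonneg_left (sum_filter_exists_two_le_prod_pow_le hq)
    (Nat.cast_nonneg _))
  rw [sum_pow_eq_sum_piAntidiag, mul_sum]
  calc _ = ∑ c ∈ (s.piAntidiag j).filter (fun c => ¬∃ i ∈ s, 2 ≤ c i),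
        (Nat.multinomial s c : R) * ∏ i ∈ s, q i ^ c i := by
        refine sum_congr rfl fun c hc => ?_
        obtain ⟨hc, hsq⟩ := mem_filter.1 hc
        have hle : ∀ i, c i ≤ 1 := fun i => by
          by_cases hi : i ∈ s
          · exact not_lt.1 fun h => hsq ⟨i, hi, h⟩
          · simp [not_imp_comm.1 ((mem_piAntidiag.1 hc).2 i) hi]
        rw [multinomial_eq_factorial_sum hle, (mem_piAntidiag.1 hc).1]
    _ ≤ _ := sum_le_sum_of_subset_of_nonneg (filter_subset _ _)
        fun c _ _ => mul_nonneg (Nat.cast_nonneg _) (prod_pow_nonneg hq c)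

end CompleteHomogeneous

section Limits

variable {α ι : Type*} {l : Filter α} {s : α → Finset ι}

lemma tendsto_sum_mul_zero_of_uniformly_small {a b : α → ι → ℝ}
    (ha : ∀ n, ∀ k ∈ s n, 0 ≤ a n k) (hb : ∀ n, ∀ k ∈ s n, 0 ≤ b n k)
    (ha_bdd : IsBoundedUnder (· ≤ ·) l fun n => ∑ k ∈ s n, a n k)
    (hb_small : ∀ ε > 0, ∀ᶠ n in l, ∀ k ∈ s n, b n k < ε) :
    Tendsto (fun n => ∑ k ∈ s n, a n k * b n k) l (𝓝 0) := by
  obtain ⟨C, hC⟩ := ha_bdd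
  refine tendsto_order.2 ⟨fun e he => Eventually.of_forall fun n =>
    he.trans_le (sum_nonneg fun k hk => mul_nonneg (ha n k hk) (hb n k hk)), fun e he => ?_⟩
  have hδ : 0 < e / (|C| + 1) := by positivity
  filter_upwards [eventually_map.1 hC, hb_small _ hδ] with n hCn hbn
  calc ∑ k ∈ s n, a n k * b n k ≤ ∑ k ∈ s n, a n k * (e / (|C| + 1)) :=
        sum_le_sum fun k hk => mul_le_mul_of_nonneg_left (hbn k hk).le (ha n k hk)
    _ = (∑ k ∈ s n, a n k) * (e / (|C| + 1)) := (sum_mul ..).symm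
    _ ≤ |C| * (e / (|C| + 1)) := mul_le_mul_of_nonneg_right (hCn.trans (le_abs_self C)) hδ.le
    _ < e := by
      rw [mul_div_assoc', div_lt_iff₀ (by positivity)]
      nlinarith [abs_nonneg C]

lemma tendsto_sum_one_sub_of_tendsto_sum_div {p : α → ι → ℝ} {lam : ℝ}
    (hp_pos : ∀ n, ∀ k ∈ s n, 0 < p n k) (hp_le : ∀ n, ∀ k ∈ s n, p n k ≤ 1)
    (hsmall : ∀ ε > 0, ∀ᶠ n in l, ∀ k ∈ s n, 1 - p n k < ε)
    (h : Tendsto (fun n => ∑ k ∈ s n, (1 - p n k) / p n k) l (𝓝 lam)) :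
    Tendsto (fun n => ∑ k ∈ s n, (1 - p n k)) l (𝓝 lam) := by
  have hq_nonneg : ∀ n, ∀ k ∈ s n, 0 ≤ 1 - p n k := fun n k hk => sub_nonneg.2 (hp_le n k hk)
  have h' := h.sub (tendsto_sum_mul_zero_of_uniformly_small
    (fun n k hk => div_nonneg (hq_nonneg n k hk) (hp_pos n k hk).le) hq_nonneg
    h.isBoundedUnder_le hsmall)
  rw [sub_zero] at h'
  refine h'.congr fun n => ?_
  rw [← sum_sub_distrib]
  refine sum_congr rfl fun k hk => ?_
  have := (hp_pos n k hk).ne'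
  field_simp
  ring

lemma prod_le_exp_neg_sum_one_sub {t : Finset ι} {p : ι → ℝ} (hp : ∀ k ∈ t, 0 ≤ p k) :
    ∏ k ∈ t, p k ≤ Real.exp (-∑ k ∈ t, (1 - p k)) := by
  rw [← sum_neg_distrib, Real.exp_sum]
  exact prod_le_prod hp fun k _ => by simpa using Real.one_sub_le_exp_neg (1 - p k)

lemma exp_neg_sum_one_sub_div_le_prod {t : Finset ι} {p : ι → ℝ} (hp : ∀ k ∈ t, 0 < p k) :
    Real.exp (-∑ k ∈ t, (1 - p k) / p k) ≤ ∏ k ∈ t, p k := by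
  rw [← sum_neg_distrib, Real.exp_sum]
  refine prod_le_prod (fun k _ => (Real.exp_pos _).le) fun k hk => ?_
  refine (Real.exp_le_exp.2 ?_).trans_eq (Real.exp_log (hp k hk))
  have hk' := (hp k hk).ne'
  calc -((1 - p k) / p k) = 1 - (p k)⁻¹ := by field_simp; ring
    _ ≤ Real.log (p k) := Real.one_sub_inv_le_log_of_pos (hp k hk)

lemma tendsto_prod_exp_neg {p : α → ι → ℝ} {lam : ℝ} (hp : ∀ n, ∀ k ∈ s n, 0 < p n k)
    (h₁ : Tendsto (fun n => ∑ k ∈ s n, (1 - p n k)) l (𝓝 lam))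
    (h₂ : Tendsto (fun n => ∑ k ∈ s n, (1 - p n k) / p n k) l (𝓝 lam)) :
    Tendsto (fun n => ∏ k ∈ s n, p n k) l (𝓝 (Real.exp (-lam))) :=
  tendsto_of_tendsto_of_tendsto_of_le_of_le
    ((Real.continuous_exp.tendsto _).comp h₂.neg) ((Real.continuous_exp.tendsto _).comp h₁.neg)
    (fun n => exp_neg_sum_one_sub_div_le_prod (hp n))
    (fun n => prod_le_exp_neg_sum_one_sub fun k hk => (hp n k hk).le)

open Nat in
lemma tendsto_completeHomogeneous [DecidableEq ι] {q : α → ι → ℝ} {lam : ℝ}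
    (hq : ∀ n, ∀ k ∈ s n, 0 ≤ q n k)
    (h₁ : Tendsto (fun n => ∑ k ∈ s n, q n k) l (𝓝 lam))
    (h₂ : Tendsto (fun n => ∑ k ∈ s n, q n k ^ 2) l (𝓝 0)) (j : ℕ) :
    Tendsto (fun n => completeHomogeneous (s n) (q n) j) l (𝓝 (lam ^ j / j !)) := by
  have hfac : (0 : ℝ) < j ! := by positivity
  have hlow : Tendsto (fun n => (∑ k ∈ s n, q n k) ^ j / j !) l (𝓝 (lam ^ j / j !)) :=
    (h₁.pow j).div_const _
  have hup : Tendsto (fun n => (∑ k ∈ s n, q n k) ^ j / j !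
      + (∑ k ∈ s n, q n k ^ 2) * (∑ k ∈ s n, q n k) ^ (j - 2)) l (𝓝 (lam ^ j / j !)) := by
    simpa using hlow.add (h₂.mul (h₁.pow (j - 2)))
  refine tendsto_of_tendsto_of_tendsto_of_le_of_le hlow hup (fun n => ?_) (fun n => ?_)
  · rw [div_le_iff₀' hfac]
    exact sum_pow_le_factorial_mul_completeHomogeneous (hq n)
  · calc completeHomogeneous (s n) (q n) j
        ≤ (∑ k ∈ s n, q n k) ^ j / j !
          + (∑ k ∈ s n, q n k ^ 2) * completeHomogeneous (s n) (q n) (j - 2) := by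
          rw [div_add' _ _ _ hfac.ne', le_div_iff₀' hfac]
          linarith [factorial_mul_completeHomogeneous_le (hq n) (j := j)]
      _ ≤ _ := by
          gcongr
          exact completeHomogeneous_le_sum_pow (hq n)

end Limits

section Probability

variable {Ω : Type*} [MeasurableSpace Ω] {μ : Measure Ω} {K : ℕ} {X : ℕ → Ω → ℕ}

lemma measure_sum_range_eq_sum_piAntidiag (hX : ∀ k, Measurable (X k))
    (hindep : iIndepFun (fun k : Fin K => X k) μ) (j : ℕ) :
    μ {ω | ∑ k ∈ range K, X k ω = j}
      = ∑ c ∈ (range K).piAntidiag j, ∏ k ∈ range K, μ {ω | X k ω = c k} := by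
  -- `{∑ X = j}` is the preimage of `piAntidiag` under the multi-index `Y`, so it splits into fibres
  set Y : Ω → ℕ → ℕ := fun ω k => if k < K then X k ω else 0
  have hfiber : ∀ c ∈ (range K).piAntidiag j, Y ⁻¹' {c} = ⋂ k ∈ range K, X k ⁻¹' {c k} := by
    intro c hc
    ext ω
    simp only [Set.mem_preimage, Set.mem_singleton_iff, Set.mem_iInter, mem_range, funext_iff,
      Y]
    refine ⟨fun h k hk => by simpa [hk] using h k, fun h k => ?_⟩
    split_ifs with hk
    · exact h k hk
    · exact (not_imp_comm.1 ((mem_piAntidiag.1 hc).2 k) (by simpa using hk)).symm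
  have hevent : {ω | ∑ k ∈ range K, X k ω = j} = Y ⁻¹' (range K).piAntidiag j := by
    ext ω
    simp only [Set.mem_preimage, mem_coe, mem_piAntidiag, Y]
    rw [sum_congr rfl fun k hk => if_pos (mem_range.1 hk)]
    exact ⟨fun h => ⟨h, fun i hi => mem_range.2 (by by_contra h'; simp [h'] at hi)⟩, And.left⟩
  rw [hevent, ← sum_measure_preimage_singleton _ fun c hc => hfiber c hc ▸
    (range K).measurableSet_biInter fun k _ => hX k (measurableSet_singleton _)]
  refine sum_congr rfl fun c hc => ?_
  have hfin : ⋂ k ∈ range K, X k ⁻¹' {c k} = ⋂ i : Fin K, X i ⁻¹' {c i} := by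
    ext ω
    simp [Fin.forall_iff]
  rw [hfiber c hc, hfin, hindep.meas_iInter fun i => ⟨{c i}, measurableSet_singleton _, rfl⟩]
  exact Fin.prod_univ_eq_prod_range (fun k => μ {ω | X k ω = c k}) K

lemma measureReal_sum_range_eq_prod_mul_completeHomogeneous [IsFiniteMeasure μ]
    (hX : ∀ k, Measurable (X k)) (hindep : iIndepFun (fun k : Fin K => X k) μ) {p q : ℕ → ℝ}
    (hlaw : ∀ k < K, ∀ j : ℕ, (μ {ω | X k ω = j}).toReal = p k * q k ^ j) (j : ℕ) :
    (μ {ω | ∑ k ∈ range K, X k ω = j}).toReal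
      = (∏ k ∈ range K, p k) * completeHomogeneous (range K) q j := by
  rw [measure_sum_range_eq_sum_piAntidiag hX hindep, ENNReal.toReal_sum fun c _ =>
    ENNReal.prod_ne_top fun k _ => measure_ne_top μ _, completeHomogeneous, mul_sum]
  refine sum_congr rfl fun c _ => ?_
  rw [ENNReal.toReal_prod, ← prod_mul_distrib]
  exact prod_congr rfl fun k hk => hlaw k (mem_range.1 hk) (c k)

end Probability

theorem corrected_geometric_array_to_poisson_general_general
    {Ω : Type*} [MeasureSpace Ω] [IsProbabilityMeasure (ℙ : Measure Ω)]
    (K : ℕ → ℕ)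
    (X : ℕ → ℕ → Ω → ℕ) (hX : ∀ n k, Measurable (X n k))
    (p q : ℕ → ℕ → ℝ) (hp : ∀ n k, k < K n → 0 < p n k ∧ p n k < 1)
    (hq : ∀ n k, q n k = 1 - p n k)
    (hindep : ∀ n, iIndepFun
      (fun k : Fin (K n) => X n k) ℙ)
    (hlaw : ∀ n, ∀ k < K n, ∀ j : ℕ,
      (ℙ {ω | X n k ω = j}).toReal = p n k * q n k ^ j)
    (hGN2 : ∀ ε > (0 : ℝ), ∀ᶠ n in atTop, ∀ k < K n, q n k / p n k ^ 2 < ε)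
    (lam : ℝ)
    (hGN3a : Tendsto (fun n => ∑ k ∈ Finset.range (K n), q n k / p n k)
      atTop (nhds lam)) :
    ∀ j : ℕ, Tendsto
      (fun n => (ℙ {ω | ∑ k ∈ Finset.range (K n), X n k ω = j}).toReal) atTop
      (nhds (Real.exp (-lam) * lam ^ j / j.factorial)) := by
  intro j
  have hp_pos : ∀ n, ∀ k ∈ range (K n), 0 < p n k := fun n k hk => (hp n k (mem_range.1 hk)).1
  have hq_nonneg : ∀ n, ∀ k ∈ range (K n), 0 ≤ q n k := fun n k hk => by
    rw [hq]
    exact sub_nonneg.2 (hp n k (mem_range.1 hk)).2.le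
  have hq_small : ∀ ε > 0, ∀ᶠ n in atTop, ∀ k ∈ range (K n), q n k < ε := fun ε hε => by
    filter_upwards [hGN2 ε hε] with n hn k hk
    obtain ⟨hp₀, hp₁⟩ := hp n k (mem_range.1 hk)
    refine lt_of_le_of_lt ?_ (hn k (mem_range.1 hk))
    exact le_div_self (hq_nonneg n k hk) (pow_pos hp₀ 2) (pow_le_one₀ hp₀.le hp₁.le)
  have hsum : Tendsto (fun n => ∑ k ∈ range (K n), q n k) atTop (𝓝 lam) := by
    simpa only [hq] using tendsto_sum_one_sub_of_tendsto_sum_div hp_pos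
      (fun n k hk => (hp n k (mem_range.1 hk)).2.le) (by simpa only [hq] using hq_small)
      (by simpa only [hq] using hGN3a)
  have hsum_sq : Tendsto (fun n => ∑ k ∈ range (K n), q n k ^ 2) atTop (𝓝 0) := by
    simpa only [sq] using tendsto_sum_mul_zero_of_uniformly_small hq_nonneg hq_nonneg
      hsum.isBoundedUnder_le hq_small
  have hprod : Tendsto (fun n => ∏ k ∈ range (K n), p n k) atTop (𝓝 (Real.exp (-lam))) :=
    tendsto_prod_exp_neg hp_pos (by simpa only [← hq] using hsum)
      (by simpa only [← hq] using hGN3a)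
  rw [mul_div_assoc]
  exact (hprod.mul (tendsto_completeHomogeneous hq_nonneg hsum hsum_sq j)).congr fun n =>
    (measureReal_sum_range_eq_prod_mul_completeHomogeneous (hX n) (hindep n) (hlaw n) j).symm

/-- For a by-row independent array of corrected geometric `G*(p k n)` random
variables (`P(X = j) = p q^j`, `q = 1 - p`) with `k(n) → ∞`, assuming
(GN2) `sup_k q_{k,n}/p_{k,n}² → 0`, (GN3) `∑_k q_{k,n}/p_{k,n}^h → λ` for `h ∈ {1,2}`
with `λ > 0`, and (GN4) for every `0 < ε < 1`,
`B(ε,n) = ∑_k ∑_{j=0}^{∞} 1{|j - q_{k,n}/p_{k,n} - 1| ≥ ε} (j - q_{k,n}/p_{k,n})² p_{k,n}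
q_{k,n}^j → 0`, the row sums converge in distribution to the Poisson law `P(λ)`. -/
theorem corrected_geometric_array_to_poisson_general
    {Ω : Type*} [MeasureSpace Ω] [IsProbabilityMeasure (ℙ : Measure Ω)]
    (K : ℕ → ℕ) (hK : Tendsto K atTop atTop)
    (X : ℕ → ℕ → Ω → ℕ) (hX : ∀ n k, Measurable (X n k))
    (p q : ℕ → ℕ → ℝ) (hp : ∀ n k, k < K n → 0 < p n k ∧ p n k < 1)
    (hq : ∀ n k, q n k = 1 - p n k)
    (hindep : ∀ n, iIndepFun
      (fun k : Fin (K n) => X n k) ℙ)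
    (hlaw : ∀ n, ∀ k < K n, ∀ j : ℕ,
      (ℙ {ω | X n k ω = j}).toReal = p n k * q n k ^ j)
    (hGN2 : ∀ ε > (0 : ℝ), ∀ᶠ n in atTop, ∀ k < K n, q n k / p n k ^ 2 < ε)
    (lam : ℝ) (hlam : 0 < lam)
    (hGN3a : Tendsto (fun n => ∑ k ∈ Finset.range (K n), q n k / p n k)
      atTop (nhds lam))
    (hGN3b : Tendsto (fun n => ∑ k ∈ Finset.range (K n), q n k / p n k ^ 2)
      atTop (nhds lam))
    (hGN4 : ∀ ε : ℝ, 0 < ε → ε < 1 →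
      Tendsto (fun n => ∑ k ∈ Finset.range (K n), ∑' j : ℕ,
        (if ε ≤ |(j : ℝ) - q n k / p n k - 1| then 1 else 0) *
          ((j : ℝ) - q n k / p n k) ^ 2 * p n k * q n k ^ j)
        atTop (nhds 0)) :
    ∀ j : ℕ, Tendsto
      (fun n => (ℙ {ω | ∑ k ∈ Finset.range (K n), X n k ω = j}).toReal) atTop
      (nhds (Real.exp (-lam) * lam ^ j / j.factorial)) :=
  corrected_geometric_array_to_poisson_general_general K X hX p q hp hq hindep hlaw hGN2 lam hGN3a
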